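/- arXiv:2205.08937 — 3 statements merged into one kernel-verified Lean document; each statement's English description precedes it below -/
import Mathlib

section
/- Let α = −2, N ≥ 8 be even, and write ℝ^N = ℝ^{N/2} × ℝ^{N/2}, x = (x′, x″). Then for every a ∈ ℝ the function v(x) = C_{N,−2} (1 + |x|⁴ − 2a(|x′|² − |x″|²) + a²)^{−(N−6)/4}, with C_{N,−2} = [(N−6)(N−2)(N+2)(N+6)]^{(N−6)/16}, is a positive solution of Δ(|x|^{−2} Δv) = |x|^{2} v^{p*_{−2} − 1} in ℝ^N ∖ {0}, where p*_{−2} = 2(N+2)/(N−6); for a ≠ 0 these solutions are non-radial. -/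
open MeasureTheory Filter Real Set

noncomputable section

/-- The Laplacian of a real-valued function on `ℝ^N`. -/
def lap (N : ℕ) (u : EuclideanSpace ℝ (Fin N) → ℝ) (x : EuclideanSpace ℝ (Fin N)) : ℝ :=
  ∑ i : Fin N, fderiv ℝ (fun y => fderiv ℝ u y (EuclideanSpace.single i 1)) x
    (EuclideanSpace.single i 1)

/-- The operator `Δ(|x|^α Δ u)`. -/
def bilap (N : ℕ) (α : ℝ) (u : EuclideanSpace ℝ (Fin N) → ℝ)
    (x : EuclideanSpace ℝ (Fin N)) : ℝ :=
  lap N (fun y => ‖y‖ ^ α * lap N u y) x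

/-- The weighted critical exponent `p*_α = 2(N-α)/(N-4+α)`. -/
def pstar (N : ℕ) (α : ℝ) : ℝ := 2 * ((N : ℝ) - α) / ((N : ℝ) - 4 + α)

/-- The squared norm of `D^{2,2}_α`:  `∫ |x|^α |Δu|²`. -/
def enorm2 (N : ℕ) (α : ℝ) (u : EuclideanSpace ℝ (Fin N) → ℝ) : ℝ :=
  ∫ x : EuclideanSpace ℝ (Fin N), ‖x‖ ^ α * (lap N u x) ^ 2

/-- A function is radial if it only depends on the norm. -/
def IsRadial (N : ℕ) (u : EuclideanSpace ℝ (Fin N) → ℝ) : Prop :=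
  ∀ x y : EuclideanSpace ℝ (Fin N), ‖x‖ = ‖y‖ → u x = u y

/-- Membership in `D^{2,2}_α(ℝ^N)`, the completion of `C_c^∞(ℝ^N)` under
`‖u‖² = ∫ |x|^α|Δu|²`: `u` is the limit of a sequence of smooth compactly supported
functions, in the `D^{2,2}_α`-norm and in the weighted `L^{p*_α}`-norm. -/
def MemD22 (N : ℕ) (α : ℝ) (u : EuclideanSpace ℝ (Fin N) → ℝ) : Prop :=
  ∃ f : ℕ → EuclideanSpace ℝ (Fin N) → ℝ,
    (∀ n, ContDiff ℝ (⊤ : ℕ∞) (f n) ∧ HasCompactSupport (f n)) ∧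
    Tendsto (fun n => ∫ x : EuclideanSpace ℝ (Fin N),
      ‖x‖ ^ α * (lap N (f n) x - lap N u x) ^ 2) atTop (nhds 0) ∧
    Tendsto (fun n => ∫ x : EuclideanSpace ℝ (Fin N),
      ‖x‖ ^ (-α) * |f n x - u x| ^ pstar N α) atTop (nhds 0)

/-- Membership in the radial subspace `D^{2,2}_{α,rad}(ℝ^N)`. -/
def MemD22rad (N : ℕ) (α : ℝ) (u : EuclideanSpace ℝ (Fin N) → ℝ) : Prop :=
  IsRadial N u ∧
  ∃ f : ℕ → EuclideanSpace ℝ (Fin N) → ℝ,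
    (∀ n, ContDiff ℝ (⊤ : ℕ∞) (f n) ∧ HasCompactSupport (f n) ∧ IsRadial N (f n)) ∧
    Tendsto (fun n => ∫ x : EuclideanSpace ℝ (Fin N),
      ‖x‖ ^ α * (lap N (f n) x - lap N u x) ^ 2) atTop (nhds 0) ∧
    Tendsto (fun n => ∫ x : EuclideanSpace ℝ (Fin N),
      ‖x‖ ^ (-α) * |f n x - u x| ^ pstar N α) atTop (nhds 0)

/-- The constant `C(M) = (M-4)(M-2)M(M+2)[Γ(M/2)²/(2Γ(M))]^{4/M}`. -/
def CM (M : ℝ) : ℝ :=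
  (M - 4) * (M - 2) * M * (M + 2) *
    ((Real.Gamma (M / 2)) ^ 2 / (2 * Real.Gamma M)) ^ (4 / M)

/-- The sharp radial CKN constant `S^{rad}(N,α)`. -/
def Srad (N : ℕ) (α : ℝ) : ℝ :=
  ((2 - α) / 2) ^ ((4 * (N : ℝ) - 4 - 2 * α) / ((N : ℝ) - 4)) *
    (2 * Real.pi ^ ((N : ℝ) / 2) / Real.Gamma ((N : ℝ) / 2)) ^ ((4 - 2 * α) / ((N : ℝ) - α)) *
    CM ((2 * (N : ℝ) - 2 * α) / (2 - α))

/-- The normalizing constant `C_{N,α}`. -/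
def Cconst (N : ℕ) (α : ℝ) : ℝ :=
  (((N : ℝ) - 4 + α) * ((N : ℝ) - 2) * ((N : ℝ) - α) * ((N : ℝ) + 2 - 2 * α)) ^
    (((N : ℝ) - 4 + α) / (8 - 4 * α))

/-- The radial positive solution `U_{λ,α}`. -/
def Ufun (N : ℕ) (α lam : ℝ) (x : EuclideanSpace ℝ (Fin N)) : ℝ :=
  Cconst N α * lam ^ (((N : ℝ) - 4 + α) / 2) *
    (1 + lam ^ (2 - α) * ‖x‖ ^ (2 - α)) ^ (-(((N : ℝ) - 4 + α) / (2 - α)))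

/-- The derivative `∂U_{λ,α}/∂λ`. -/
def dU (N : ℕ) (α lam : ℝ) (x : EuclideanSpace ℝ (Fin N)) : ℝ :=
  deriv (fun t : ℝ => Ufun N α t x) lam

/-- `Z_0`, the generator of the radial part of the kernel of the linearization. -/
def Z0 (N : ℕ) (α : ℝ) (x : EuclideanSpace ℝ (Fin N)) : ℝ :=
  (1 - ‖x‖ ^ (2 - α)) * (1 + ‖x‖ ^ (2 - α)) ^ (-(((N : ℝ) - 2) / (2 - α)))

/-- Distance to the two-dimensional manifold `ℳ₂ = {c U_{λ,α}}`. -/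
def distM2 (N : ℕ) (α : ℝ) (u : EuclideanSpace ℝ (Fin N) → ℝ) : ℝ :=
  sInf {d : ℝ | ∃ c lam : ℝ, 0 < lam ∧
    d = Real.sqrt (enorm2 N α (fun x => u x - c * Ufun N α lam x))}

/-- Solutions of the eigenvalue problem `Δ(|x|^αΔv) = μ|x|^{-α}U_λ^{p*-2}v`. -/
def IsLinSol (N : ℕ) (α μ lam : ℝ) (v : EuclideanSpace ℝ (Fin N) → ℝ) : Prop :=
  MemD22 N α v ∧ ∀ x : EuclideanSpace ℝ (Fin N), x ≠ 0 →
    bilap N α v x = μ * ‖x‖ ^ (-α) * (Ufun N α lam x) ^ (pstar N α - 2) * v x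

/-- The set of eigenvalues. -/
def EigSet (N : ℕ) (α lam : ℝ) : Set ℝ :=
  {μ | ∃ v, IsLinSol N α μ lam v ∧ v ≠ 0}


/-- The non-radial branch of solutions for `α = -2`, bifurcating from `U_{1,-2}`. -/
def branchSol (N m : ℕ) (a : ℝ) (x : EuclideanSpace ℝ (Fin N)) : ℝ :=
  (((N : ℝ) - 6) * ((N : ℝ) - 2) * ((N : ℝ) + 2) * ((N : ℝ) + 6)) ^ (((N : ℝ) - 6) / 16) *
    (1 + ‖x‖ ^ (4 : ℝ) -
        2 * a * ((∑ i : Fin N, if (i : ℕ) < m then x i ^ 2 else 0) -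
          (∑ i : Fin N, if (i : ℕ) < m then 0 else x i ^ 2)) + a ^ 2) ^
      (-(((N : ℝ) - 6) / 4))

namespace NRAux

variable {N : ℕ}

/-- sign pattern -/
def eps (m : ℕ) (i : Fin N) : ℝ := if (i : ℕ) < m then 1 else -1

def Tf (x : EuclideanSpace ℝ (Fin N)) : ℝ := ∑ i, x i ^ 2

def Sf (m : ℕ) (x : EuclideanSpace ℝ (Fin N)) : ℝ := ∑ i, eps m i * x i ^ 2

def qf (m : ℕ) (a : ℝ) (x : EuclideanSpace ℝ (Fin N)) : ℝ :=
  1 + Tf x ^ 2 - 2 * a * Sf m x + a ^ 2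

def DT (x : EuclideanSpace ℝ (Fin N)) : EuclideanSpace ℝ (Fin N) →L[ℝ] ℝ :=
  ∑ j, (2 * x j) • EuclideanSpace.proj j

def Dq (m : ℕ) (a : ℝ) (x : EuclideanSpace ℝ (Fin N)) :
    EuclideanSpace ℝ (Fin N) →L[ℝ] ℝ :=
  ∑ j, ((4 * Tf x - 4 * a * eps m j) * x j) • EuclideanSpace.proj j

lemma eps_sq (m : ℕ) (i : Fin N) : eps m i ^ 2 = 1 := by
  unfold eps; split <;> norm_num

lemma Tf_nonneg (x : EuclideanSpace ℝ (Fin N)) : 0 ≤ Tf x :=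
  Finset.sum_nonneg fun i _ => sq_nonneg _

lemma Sf_le (m : ℕ) (x : EuclideanSpace ℝ (Fin N)) : Sf m x ≤ Tf x :=
  Finset.sum_le_sum fun i _ => by
    unfold eps; split <;> nlinarith [sq_nonneg (x i)]

lemma neg_Sf_le (m : ℕ) (x : EuclideanSpace ℝ (Fin N)) : -Tf x ≤ Sf m x := by
  have h : ∀ i ∈ Finset.univ, -(x i ^ 2) ≤ eps m i * x i ^ 2 := fun i _ => by
    unfold eps; split <;> nlinarith [sq_nonneg (x i)]
  have := Finset.sum_le_sum h
  simpa [Tf, Sf] using this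

lemma qf_pos (m : ℕ) (a : ℝ) (x : EuclideanSpace ℝ (Fin N)) : 0 < qf m a x := by
  have h1 := Sf_le m x
  have h2 := neg_Sf_le m x
  unfold qf
  nlinarith [sq_nonneg (a - Sf m x), mul_nonneg (sub_nonneg.2 h1) (by linarith : (0:ℝ) ≤ Tf x + Sf m x)]

lemma hasFDerivAt_proj (i : Fin N) (x : EuclideanSpace ℝ (Fin N)) :
    HasFDerivAt (fun y : EuclideanSpace ℝ (Fin N) => y i)
      (EuclideanSpace.proj (𝕜 := ℝ) i) x :=
  ((EuclideanSpace.proj (𝕜 := ℝ) i).hasFDerivAt (x := x)).congr_of_eventuallyEq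
    (Filter.Eventually.of_forall fun y => by simp)

lemma hasFDerivAt_sq {f : EuclideanSpace ℝ (Fin N) → ℝ}
    {f' : EuclideanSpace ℝ (Fin N) →L[ℝ] ℝ} {x : EuclideanSpace ℝ (Fin N)}
    (h : HasFDerivAt f f' x) :
    HasFDerivAt (fun y => f y ^ 2) ((2 * f x) • f') x := by
  have h2 := h.fun_mul h
  simp only [pow_two]
  rw [two_mul, add_smul]
  exact h2

lemma hasFDerivAt_Tf (x : EuclideanSpace ℝ (Fin N)) : HasFDerivAt Tf (DT x) x := by
  have h : ∀ j ∈ Finset.univ, HasFDerivAt (fun y : EuclideanSpace ℝ (Fin N) => y j ^ 2)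
      ((2 * x j) • EuclideanSpace.proj (𝕜 := ℝ) j) x :=
    fun j _ => hasFDerivAt_sq (hasFDerivAt_proj j x)
  exact HasFDerivAt.fun_sum h

lemma hasFDerivAt_Sf (m : ℕ) (x : EuclideanSpace ℝ (Fin N)) :
    HasFDerivAt (Sf m) (∑ j, (2 * eps m j * x j) • EuclideanSpace.proj (𝕜 := ℝ) j) x := by
  have h : ∀ j ∈ Finset.univ,
      HasFDerivAt (fun y : EuclideanSpace ℝ (Fin N) => eps m j * y j ^ 2)
        ((2 * eps m j * x j) • EuclideanSpace.proj (𝕜 := ℝ) j) x := by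
    intro j _
    have := (hasFDerivAt_sq (hasFDerivAt_proj j x)).const_mul (eps m j)
    rwa [smul_smul, show eps m j * (2 * x j) = 2 * eps m j * x j by ring] at this
  exact HasFDerivAt.fun_sum h

lemma hasFDerivAt_qf (m : ℕ) (a : ℝ) (x : EuclideanSpace ℝ (Fin N)) :
    HasFDerivAt (qf m a) (Dq m a x) x := by
  have hT2 := hasFDerivAt_sq (hasFDerivAt_Tf x)
  have hS := hasFDerivAt_Sf m x
  have h1 := ((hT2.const_add 1).sub (hS.const_mul (2 * a))).add_const (a ^ 2)
  have heq : ((2 * Tf x) • DT x - (2 * a) • ∑ j, (2 * eps m j * x j) • EuclideanSpace.proj (𝕜 := ℝ) j)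
      = Dq m a x := by
    ext y
    simp only [ContinuousLinearMap.coe_sub', Pi.sub_apply, ContinuousLinearMap.coe_smul',
      Pi.smul_apply, ContinuousLinearMap.coe_sum', Finset.sum_apply, smul_eq_mul,
      Dq, DT, PiLp.proj_apply]
    rw [Finset.mul_sum, Finset.mul_sum, ← Finset.sum_sub_distrib]
    exact Finset.sum_congr rfl fun j _ => by ring
  rw [← heq]
  exact h1

lemma DT_single (x : EuclideanSpace ℝ (Fin N)) (i : Fin N) :
    DT x (EuclideanSpace.single i (1:ℝ)) = 2 * x i := by
  simp [DT, ContinuousLinearMap.sum_apply, EuclideanSpace.single_apply,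
    mul_ite, Finset.sum_ite_eq]

lemma Dq_single (m : ℕ) (a : ℝ) (x : EuclideanSpace ℝ (Fin N)) (i : Fin N) :
    Dq m a x (EuclideanSpace.single i (1:ℝ)) = (4 * Tf x - 4 * a * eps m i) * x i := by
  simp [Dq, ContinuousLinearMap.sum_apply, EuclideanSpace.single_apply,
    mul_ite, Finset.sum_ite_eq]

lemma hasFDerivAt_cpow (m : ℕ) (a c ρ : ℝ) (x : EuclideanSpace ℝ (Fin N)) :
    HasFDerivAt (fun y => c * qf m a y ^ ρ)
      ((c * (ρ * qf m a x ^ (ρ - 1))) • Dq m a x) x := by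
  have := ((hasFDerivAt_qf m a x).rpow_const (p := ρ) (Or.inl (qf_pos m a x).ne')).const_mul c
  rwa [smul_smul] at this

lemma fderiv_cpow_apply (m : ℕ) (a c ρ : ℝ) (y : EuclideanSpace ℝ (Fin N)) (i : Fin N) :
    fderiv ℝ (fun z => c * qf m a z ^ ρ) y (EuclideanSpace.single i (1:ℝ))
      = c * (ρ * qf m a y ^ (ρ - 1)) * ((4 * Tf y - 4 * a * eps m i) * y i) := by
  rw [(hasFDerivAt_cpow m a c ρ y).fderiv, ContinuousLinearMap.smul_apply, Dq_single,
    smul_eq_mul]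

def D2 (m : ℕ) (a c ρ : ℝ) (x : EuclideanSpace ℝ (Fin N)) (i : Fin N) :
    EuclideanSpace ℝ (Fin N) →L[ℝ] ℝ :=
  (c * ρ) • (qf m a x ^ (ρ - 1) •
      ((4 * Tf x - 4 * a * eps m i) • EuclideanSpace.proj i + x i • ((4:ℝ) • DT x))
    + ((4 * Tf x - 4 * a * eps m i) * x i) • (((ρ - 1) * qf m a x ^ (ρ - 2)) • Dq m a x))

lemma hasFDerivAt_inner (m : ℕ) (a c ρ : ℝ) (x : EuclideanSpace ℝ (Fin N)) (i : Fin N) :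
    HasFDerivAt (fun y => fderiv ℝ (fun z => c * qf m a z ^ ρ) y (EuclideanSpace.single i (1:ℝ)))
      (D2 m a c ρ x i) x := by
  have hfun : (fun y => fderiv ℝ (fun z => c * qf m a z ^ ρ) y (EuclideanSpace.single i (1:ℝ)))
      = fun y => (c * ρ) * (qf m a y ^ (ρ - 1) * ((4 * Tf y - 4 * a * eps m i) * y i)) := by
    funext y; rw [fderiv_cpow_apply]; ring
  rw [hfun]
  have hA : HasFDerivAt (fun y => qf m a y ^ (ρ - 1))
      (((ρ - 1) * qf m a x ^ (ρ - 2)) • Dq m a x) x := by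
    have := (hasFDerivAt_qf m a x).rpow_const (p := ρ - 1) (Or.inl (qf_pos m a x).ne')
    rwa [show ρ - 1 - 1 = ρ - 2 by ring] at this
  have hc : HasFDerivAt (fun y => 4 * Tf y - 4 * a * eps m i) ((4:ℝ) • DT x) x :=
    ((hasFDerivAt_Tf x).const_mul 4).sub_const _
  have hB := hc.mul (hasFDerivAt_proj i x)
  exact (hA.mul hB).const_mul (c * ρ)

lemma D2_single (m : ℕ) (a c ρ : ℝ) (x : EuclideanSpace ℝ (Fin N)) (i : Fin N) :
    D2 m a c ρ x i (EuclideanSpace.single i (1:ℝ))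
      = c * ρ * (qf m a x ^ (ρ - 1) * (4 * Tf x - 4 * a * eps m i + 8 * x i ^ 2)
          + (ρ - 1) * qf m a x ^ (ρ - 2) * ((4 * Tf x - 4 * a * eps m i) * x i) ^ 2) := by
  have hp : (EuclideanSpace.proj (𝕜 := ℝ) i) (EuclideanSpace.single i (1:ℝ)) = 1 := by
    simp [EuclideanSpace.single_apply]
  simp only [D2, ContinuousLinearMap.smul_apply, ContinuousLinearMap.add_apply,
    smul_eq_mul, Dq_single, DT_single, hp]
  ring

lemma eps_sum {m : ℕ} (hNm : N = 2 * m) : ∑ i : Fin N, eps m i = 0 := by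
  subst hNm
  unfold eps
  rw [Fin.sum_univ_eq_sum_range (fun k => if k < m then (1:ℝ) else -1) (2 * m)]
  rw [Finset.range_eq_Ico, ← Finset.sum_Ico_consecutive _ (Nat.zero_le m) (by omega : m ≤ 2 * m)]
  have h1 : ∑ k ∈ Finset.Ico 0 m, (if k < m then (1:ℝ) else -1) = m := by
    rw [Finset.sum_congr rfl fun k hk => if_pos (Finset.mem_Ico.1 hk).2]
    simp
  have h2 : ∑ k ∈ Finset.Ico m (2 * m), (if k < m then (1:ℝ) else -1) = -(m:ℝ) := by
    rw [Finset.sum_congr rfl fun k hk => if_neg (by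
      have := (Finset.mem_Ico.1 hk).1; omega)]
    simp [Nat.card_Ico]
    rw [show 2 * m - m = m by omega]
  rw [h1, h2]; ring

lemma sum_P_sq (m : ℕ) (a : ℝ) (x : EuclideanSpace ℝ (Fin N)) :
    ∑ i : Fin N, ((4 * Tf x - 4 * a * eps m i) * x i) ^ 2
      = 16 * Tf x * (qf m a x - 1) := by
  have h : ∀ i ∈ Finset.univ, ((4 * Tf x - 4 * a * eps m i) * x i) ^ 2
      = 16 * Tf x ^ 2 * x i ^ 2 - 32 * a * Tf x * (eps m i * x i ^ 2) + 16 * a ^ 2 * x i ^ 2 := by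
    intro i _
    linear_combination (16 * a ^ 2 * x i ^ 2) * eps_sq m i
  rw [Finset.sum_congr rfl h]
  rw [Finset.sum_add_distrib, Finset.sum_sub_distrib, ← Finset.mul_sum, ← Finset.mul_sum,
    ← Finset.mul_sum]
  have hT : (∑ i : Fin N, x i ^ 2) = Tf x := rfl
  have hS : (∑ i : Fin N, eps m i * x i ^ 2) = Sf m x := rfl
  rw [hT, hS]
  unfold qf; ring

lemma lap_cpow {m : ℕ} (hNm : N = 2 * m) (a c ρ : ℝ) (x : EuclideanSpace ℝ (Fin N)) :
    lap N (fun z => c * qf m a z ^ ρ) x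
      = c * ρ * ((4 * (N:ℝ) + 8) * Tf x * qf m a x ^ (ρ - 1)
          + (ρ - 1) * qf m a x ^ (ρ - 2) * (16 * Tf x * (qf m a x - 1))) := by
  have h1 : ∀ i ∈ Finset.univ,
      fderiv ℝ (fun y => fderiv ℝ (fun z => c * qf m a z ^ ρ) y (EuclideanSpace.single i (1:ℝ))) x
          (EuclideanSpace.single i (1:ℝ))
        = c * ρ * qf m a x ^ (ρ - 1) * (4 * Tf x) + (- (c * ρ * qf m a x ^ (ρ - 1) * (4 * a))) * eps m i
          + (c * ρ * qf m a x ^ (ρ - 1) * 8) * x i ^ 2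
          + (c * ρ * (ρ - 1) * qf m a x ^ (ρ - 2)) * ((4 * Tf x - 4 * a * eps m i) * x i) ^ 2 := by
    intro i _
    rw [(hasFDerivAt_inner m a c ρ x i).fderiv, D2_single]
    ring
  unfold lap
  rw [Finset.sum_congr rfl h1]
  rw [Finset.sum_add_distrib, Finset.sum_add_distrib, Finset.sum_add_distrib]
  have s1 : ∑ _i : Fin N, c * ρ * qf m a x ^ (ρ - 1) * (4 * Tf x)
      = (N:ℝ) * (c * ρ * qf m a x ^ (ρ - 1) * (4 * Tf x)) := by
    rw [Finset.sum_const, Finset.card_univ, Fintype.card_fin, nsmul_eq_mul]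
  have s2 : ∑ i : Fin N, (- (c * ρ * qf m a x ^ (ρ - 1) * (4 * a))) * eps m i = 0 := by
    rw [← Finset.mul_sum, eps_sum hNm, mul_zero]
  have s3 : ∑ i : Fin N, (c * ρ * qf m a x ^ (ρ - 1) * 8) * x i ^ 2
      = (c * ρ * qf m a x ^ (ρ - 1) * 8) * Tf x := by
    rw [← Finset.mul_sum]; rfl
  have s4 : ∑ i : Fin N, (c * ρ * (ρ - 1) * qf m a x ^ (ρ - 2))
        * ((4 * Tf x - 4 * a * eps m i) * x i) ^ 2
      = (c * ρ * (ρ - 1) * qf m a x ^ (ρ - 2)) * (16 * Tf x * (qf m a x - 1)) := by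
    rw [← Finset.mul_sum, sum_P_sq]
  rw [s1, s2, s3, s4]
  ring

lemma lap_congr_nhds {f g : EuclideanSpace ℝ (Fin N) → ℝ} {x : EuclideanSpace ℝ (Fin N)}
    (h : f =ᶠ[nhds x] g) : lap N f x = lap N g x := by
  unfold lap
  refine Finset.sum_congr rfl fun i _ => ?_
  have h2 : (fun y => fderiv ℝ f y (EuclideanSpace.single i (1:ℝ)))
      =ᶠ[nhds x] (fun y => fderiv ℝ g y (EuclideanSpace.single i (1:ℝ))) := by
    filter_upwards [h.fderiv (𝕜 := ℝ)] with y hy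
    rw [hy]
  rw [h2.fderiv_eq]

lemma lap_add_cpow (m : ℕ) (a c₁ ρ₁ c₂ ρ₂ : ℝ) (x : EuclideanSpace ℝ (Fin N)) :
    lap N (fun z => c₁ * qf m a z ^ ρ₁ + c₂ * qf m a z ^ ρ₂) x
      = lap N (fun z => c₁ * qf m a z ^ ρ₁) x + lap N (fun z => c₂ * qf m a z ^ ρ₂) x := by
  unfold lap
  rw [← Finset.sum_add_distrib]
  refine Finset.sum_congr rfl fun i _ => ?_
  have hinner : (fun y => fderiv ℝ (fun z => c₁ * qf m a z ^ ρ₁ + c₂ * qf m a z ^ ρ₂) y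
        (EuclideanSpace.single i (1:ℝ)))
      = fun y => fderiv ℝ (fun z => c₁ * qf m a z ^ ρ₁) y (EuclideanSpace.single i (1:ℝ))
          + fderiv ℝ (fun z => c₂ * qf m a z ^ ρ₂) y (EuclideanSpace.single i (1:ℝ)) := by
    funext y
    rw [((hasFDerivAt_cpow m a c₁ ρ₁ y).fun_add (hasFDerivAt_cpow m a c₂ ρ₂ y)).fderiv,
      (hasFDerivAt_cpow m a c₁ ρ₁ y).fderiv, (hasFDerivAt_cpow m a c₂ ρ₂ y).fderiv,
      ContinuousLinearMap.add_apply]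
  rw [hinner,
    ((hasFDerivAt_inner m a c₁ ρ₁ x i).fun_add (hasFDerivAt_inner m a c₂ ρ₂ x i)).fderiv,
    (hasFDerivAt_inner m a c₁ ρ₁ x i).fderiv, (hasFDerivAt_inner m a c₂ ρ₂ x i).fderiv,
    ContinuousLinearMap.add_apply]

lemma norm_sq_eq (x : EuclideanSpace ℝ (Fin N)) : ‖x‖ ^ (2:ℝ) = Tf x := by
  rw [show (2:ℝ) = ((2:ℕ):ℝ) by norm_num, Real.rpow_natCast]
  rw [EuclideanSpace.norm_eq, Real.sq_sqrt (by positivity)]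
  unfold Tf
  exact Finset.sum_congr rfl fun i _ => by rw [Real.norm_eq_abs, sq_abs]

lemma norm_pow4 (x : EuclideanSpace ℝ (Fin N)) : ‖x‖ ^ (4:ℝ) = Tf x ^ 2 := by
  rw [show (4:ℝ) = (2:ℝ) * 2 by norm_num, Real.rpow_mul (norm_nonneg x), norm_sq_eq]
  rw [show (2:ℝ) = ((2:ℕ):ℝ) by norm_num, Real.rpow_natCast]

lemma Tf_single (i : Fin N) : Tf (EuclideanSpace.single i (1:ℝ)) = 1 := by
  unfold Tf
  rw [Finset.sum_eq_single i (fun j _ hj => by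
      simp [EuclideanSpace.single_apply, hj]) (fun h => absurd (Finset.mem_univ i) h)]
  simp [EuclideanSpace.single_apply]

lemma Sf_single (m : ℕ) (i : Fin N) : Sf m (EuclideanSpace.single i (1:ℝ)) = eps m i := by
  unfold Sf
  rw [Finset.sum_eq_single i (fun j _ hj => by
      simp [EuclideanSpace.single_apply, hj]) (fun h => absurd (Finset.mem_univ i) h)]
  simp [EuclideanSpace.single_apply]

end NRAux

open NRAux in
lemma pde_aux {N m : ℕ} (hNm : N = 2 * m) (h6 : (6:ℝ) < (N:ℝ)) (a : ℝ)
    (x : EuclideanSpace ℝ (Fin N)) (hx : x ≠ 0) :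
    bilap N (-2)
      (fun y => (((N:ℝ)-6)*((N:ℝ)-2)*((N:ℝ)+2)*((N:ℝ)+6)) ^ (((N:ℝ)-6)/16)
        * qf m a y ^ (-(((N:ℝ)-6)/4))) x
      = ‖x‖ ^ (2:ℝ)
        * ((((N:ℝ)-6)*((N:ℝ)-2)*((N:ℝ)+2)*((N:ℝ)+6)) ^ (((N:ℝ)-6)/16)
            * qf m a x ^ (-(((N:ℝ)-6)/4))) ^ (pstar N (-2) - 1) := by
  have h2 : (0:ℝ) < (N:ℝ) - 6 := by linarith
  set n : ℝ := (N:ℝ) with hn_def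
  set K : ℝ := (n-6)*(n-2)*(n+2)*(n+6) with hK_def
  have hK : 0 < K := by
    rw [hK_def]
    exact mul_pos (mul_pos (mul_pos h2 (by linarith)) (by linarith)) (by linarith)
  set Cc : ℝ := K ^ ((n-6)/16) with hCc_def
  have hCc : 0 < Cc := Real.rpow_pos_of_pos hK _
  set r : ℝ := -((n-6)/4) with hr_def
  unfold bilap
  have hw : (fun y : EuclideanSpace ℝ (Fin N) =>
        ‖y‖ ^ (-2:ℝ) * lap N (fun z => Cc * qf m a z ^ r) y)
      =ᶠ[nhds x] (fun y => (-4*(n-6)*Cc) * qf m a y ^ (r-1)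
          + (-((n-6)*(n-2))*Cc) * qf m a y ^ (r-2)) := by
    filter_upwards [isOpen_compl_singleton.mem_nhds
      (show x ∈ ({(0 : EuclideanSpace ℝ (Fin N))}ᶜ : _root_.Set _) from hx)] with y hy
    have hy0 : (0:ℝ) < ‖y‖ := norm_pos_iff.2 hy
    rw [lap_cpow hNm]
    have hT1 : ‖y‖ ^ (-2:ℝ) * Tf y = 1 := by
      rw [← norm_sq_eq, ← Real.rpow_add hy0]; norm_num
    have hq0 := (qf_pos m a y).ne'
    have hq1 : qf m a y ^ (r-1) = qf m a y ^ (r-2) * qf m a y := by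
      rw [show r - 1 = (r-2) + 1 by ring, Real.rpow_add_one hq0]
    have hfac : Cc * r * ((4*n+8) * Tf y * qf m a y ^ (r-1)
        + (r-1) * qf m a y ^ (r-2) * (16 * Tf y * (qf m a y - 1)))
        = Tf y * (Cc * r * ((4*n+8) * qf m a y ^ (r-1)
            + 16 * (r-1) * qf m a y ^ (r-2) * (qf m a y - 1))) := by ring
    rw [hfac, ← mul_assoc, hT1, one_mul, hq1, hr_def]
    ring
  have hlap_eq : lap N (fun y => ‖y‖ ^ (-2:ℝ) * lap N (fun z => Cc * qf m a z ^ r) y) x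
      = lap N (fun y => (-4*(n-6)*Cc) * qf m a y ^ (r-1)
          + (-((n-6)*(n-2))*Cc) * qf m a y ^ (r-2)) x := lap_congr_nhds hw
  rw [hlap_eq, lap_add_cpow, lap_cpow hNm, lap_cpow hNm]
  have hne6 : n - 6 ≠ 0 := by linarith
  have hne6' : n - 4 + -2 ≠ 0 := by intro h; apply hne6; linarith
  have hp : pstar N (-2) - 1 = (n+10)/(n-6) := by
    unfold pstar
    rw [← hn_def]
    field_simp
    ring
  rw [hp]
  have hqpos := qf_pos m a x
  have hq0 := hqpos.ne'
  have hrw : (Cc * qf m a x ^ r) ^ ((n+10)/(n-6)) = (K * Cc) * qf m a x ^ (r-4) := by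
    rw [Real.mul_rpow hCc.le (Real.rpow_pos_of_pos hqpos r).le,
      ← Real.rpow_mul hqpos.le, hCc_def, ← Real.rpow_mul hK.le]
    congr 1
    · rw [show (n-6)/16 * ((n+10)/(n-6)) = 1 + (n-6)/16 by field_simp; ring,
        Real.rpow_add hK, Real.rpow_one]
    · congr 1
      rw [hr_def]; field_simp; ring
  rw [hrw, norm_sq_eq]
  have e1 : qf m a x ^ (r-1-1) = qf m a x ^ (r-4) * qf m a x * qf m a x := by
    rw [show r-1-1 = (r-4) + 1 + 1 by ring, Real.rpow_add_one hq0, Real.rpow_add_one hq0]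
  have e2 : qf m a x ^ (r-1-2) = qf m a x ^ (r-4) * qf m a x := by
    rw [show r-1-2 = (r-4) + 1 by ring, Real.rpow_add_one hq0]
  have e3 : qf m a x ^ (r-2-1) = qf m a x ^ (r-4) * qf m a x := by
    rw [show r-2-1 = (r-4) + 1 by ring, Real.rpow_add_one hq0]
  have e4 : qf m a x ^ (r-2-2) = qf m a x ^ (r-4) := by
    rw [show r-2-2 = r-4 by ring]
  rw [e1, e2, e3, e4, hK_def, hr_def]
  ring
/-- for `α = -2`, `N ≥ 8` even, `ℝ^N = ℝ^{N/2} × ℝ^{N/2}`, the functions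
`v(x) = C_{N,-2}(1+|x|⁴-2a(|x'|²-|x''|²)+a²)^{-(N-6)/4}` are positive solutions of
`Δ(|x|^{-2}Δv) = |x|²v^{p*_{-2}-1}` on `ℝ^N ∖ {0}`, non-radial when `a ≠ 0`. -/
theorem nonradial_branch (N m : ℕ) (hN : 8 ≤ N) (hNeven : N = 2 * m) (a : ℝ) :
    (∀ x : EuclideanSpace ℝ (Fin N), 0 < branchSol N m a x) ∧
    (∀ x : EuclideanSpace ℝ (Fin N), x ≠ 0 →
      bilap N (-2) (branchSol N m a) x
        = ‖x‖ ^ (2 : ℝ) * branchSol N m a x ^ (pstar N (-2) - 1)) ∧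
    (a ≠ 0 → ¬ IsRadial N (branchSol N m a)) := by
  have hn8 : (8:ℝ) ≤ (N:ℝ) := by exact_mod_cast hN
  have h6 : (6:ℝ) < (N:ℝ) := by linarith
  have hb : branchSol N m a = fun y =>
      (((N:ℝ)-6)*((N:ℝ)-2)*((N:ℝ)+2)*((N:ℝ)+6)) ^ (((N:ℝ)-6)/16)
        * NRAux.qf m a y ^ (-(((N:ℝ)-6)/4)) := by
    funext y
    have hSd : (∑ i : Fin N, if (i:ℕ) < m then y i ^ 2 else 0)
        - (∑ i : Fin N, if (i:ℕ) < m then 0 else y i ^ 2) = NRAux.Sf m y := by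
      rw [← Finset.sum_sub_distrib]
      unfold NRAux.Sf NRAux.eps
      refine Finset.sum_congr rfl fun i _ => ?_
      by_cases h : (i:ℕ) < m <;> simp [h]
    unfold branchSol NRAux.qf
    rw [NRAux.norm_pow4, hSd]
  have hK : (0:ℝ) < ((N:ℝ)-6)*((N:ℝ)-2)*((N:ℝ)+2)*((N:ℝ)+6) :=
    mul_pos (mul_pos (mul_pos (by linarith) (by linarith)) (by linarith)) (by linarith)
  have hCc : (0:ℝ) < (((N:ℝ)-6)*((N:ℝ)-2)*((N:ℝ)+2)*((N:ℝ)+6)) ^ (((N:ℝ)-6)/16) :=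
    Real.rpow_pos_of_pos hK _
  refine ⟨fun x => ?_, fun x hx => ?_, fun ha hrad => ?_⟩
  · rw [hb]
    exact mul_pos hCc (Real.rpow_pos_of_pos (NRAux.qf_pos m a x) _)
  · rw [hb]
    exact pde_aux hNeven h6 a x hx
  · have hm4 : 4 ≤ m := by omega
    have h0N : 0 < N := by omega
    have hmN : m < N := by omega
    have heq := hrad (EuclideanSpace.single (⟨0, h0N⟩ : Fin N) (1:ℝ))
      (EuclideanSpace.single (⟨m, hmN⟩ : Fin N) (1:ℝ))
      (by rw [EuclideanSpace.norm_single, EuclideanSpace.norm_single])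
    rw [hb] at heq
    simp only [] at heq
    have hq1 : NRAux.qf m a (EuclideanSpace.single (⟨0, h0N⟩ : Fin N) (1:ℝ))
        = 2 - 2*a + a^2 := by
      unfold NRAux.qf
      rw [NRAux.Tf_single, NRAux.Sf_single]
      unfold NRAux.eps
      rw [if_pos (show ((⟨0, h0N⟩ : Fin N) : ℕ) < m from (by omega : (0:ℕ) < m))]
      ring
    have hq2 : NRAux.qf m a (EuclideanSpace.single (⟨m, hmN⟩ : Fin N) (1:ℝ))
        = 2 + 2*a + a^2 := by
      unfold NRAux.qf
      rw [NRAux.Tf_single, NRAux.Sf_single]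
      unfold NRAux.eps
      rw [if_neg (show ¬ ((⟨m, hmN⟩ : Fin N) : ℕ) < m from (by omega : ¬ (m:ℕ) < m))]
      ring
    rw [hq1, hq2] at heq
    have h1pos : (0:ℝ) < 2 - 2*a + a^2 := by nlinarith [sq_nonneg (1-a)]
    have h2pos : (0:ℝ) < 2 + 2*a + a^2 := by nlinarith [sq_nonneg (1+a)]
    have hr0 : (-(((N:ℝ)-6)/4)) ≠ 0 := by
      have : (0:ℝ) < ((N:ℝ)-6)/4 := by linarith
      exact ne_of_lt (by linarith)
    have hc : (2 - 2*a + a^2 : ℝ) ^ (-(((N:ℝ)-6)/4))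
        = (2 + 2*a + a^2 : ℝ) ^ (-(((N:ℝ)-6)/4)) :=
      mul_left_cancel₀ (ne_of_gt hCc) heq
    have h2 := congrArg (fun t : ℝ => t ^ (1 / (-(((N:ℝ)-6)/4)))) hc
    simp only [← Real.rpow_mul h1pos.le, ← Real.rpow_mul h2pos.le] at h2
    rw [mul_one_div_cancel hr0, Real.rpow_one, Real.rpow_one] at h2
    have : a = 0 := by linarith
    exact ha this
end
end

section
/- Let N ≥ 3, 4 − N < α < 2, p*_α = 2(N−α)/(N−4+α), and let h ∈ L^∞(ℝ^N) ∩ C(ℝ^N) satisfy lim_{|x|→0} h(x) = lim_{|x|→∞} h(x) = 0. Then ‖|h|^{1/p*_α} U_{λ,α}‖_* = (∫_{ℝ^N} |h(x)| |x|^{−α} U_{λ,α}(x)^{p*_α} dx)^{1/p*_α} → 0 as λ → 0 and as λ → ∞. -/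
open MeasureTheory Filter Real Set

noncomputable section

section AuxProof
open Metric
open scoped ENNReal NNReal Topology

lemma integrableOn_norm_rpow_ball (N : ℕ) {α : ℝ} (hαN : α < N) :
    IntegrableOn (fun y : EuclideanSpace ℝ (Fin N) => ‖y‖ ^ (-α)) (ball 0 1) volume := by
  have hmeas : Measurable (fun y : EuclideanSpace ℝ (Fin N) => ‖y‖ ^ (-α)) := by fun_prop
  rcases le_or_gt α 0 with hα0 | hα0
  · refine Integrable.mono (g := fun _ => (1:ℝ))
      (integrableOn_const measure_ball_lt_top.ne) hmeas.aestronglyMeasurable ?_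
    filter_upwards [ae_restrict_mem measurableSet_ball] with y hy
    rw [Real.norm_eq_abs, abs_of_nonneg (Real.rpow_nonneg (norm_nonneg _) _)]
    simp only [mem_ball, dist_zero_right] at hy
    calc ‖y‖ ^ (-α) ≤ 1 := Real.rpow_le_one (norm_nonneg _) hy.le (by linarith)
      _ ≤ ‖(1:ℝ)‖ := by norm_num
  · constructor
    · exact hmeas.aestronglyMeasurable
    · have hnn : ∀ y : EuclideanSpace ℝ (Fin N), 0 ≤ ‖y‖ ^ (-α) :=
        fun y => Real.rpow_nonneg (norm_nonneg _) _
      have hconv : (∫⁻ a : EuclideanSpace ℝ (Fin N) in ball 0 1, ‖‖a‖ ^ (-α)‖ₑ) =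
          ∫⁻ a : EuclideanSpace ℝ (Fin N) in ball 0 1, ENNReal.ofReal (‖a‖ ^ (-α)) :=
        lintegral_enorm_of_nonneg fun _ => hnn _
      rw [HasFiniteIntegral, hconv,
        lintegral_eq_lintegral_meas_le _ (Eventually.of_forall hnn) hmeas.aemeasurable]
      have hαN' : (-α)⁻¹ * N < -1 := by
        rw [inv_neg, neg_mul, neg_lt_neg_iff, inv_mul_eq_div, lt_div_iff₀ hα0, one_mul]
        exact hαN
      calc ∫⁻ t in Ioi 0, (volume.restrict (ball (0:EuclideanSpace ℝ (Fin N)) 1))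
              {a | t ≤ ‖a‖ ^ (-α)}
          ≤ ∫⁻ t in Ioc 0 1 ∪ Ioi 1, (volume.restrict (ball (0:EuclideanSpace ℝ (Fin N)) 1))
              {a | t ≤ ‖a‖ ^ (-α)} := lintegral_mono_set Ioi_subset_Ioc_union_Ioi
        _ ≤ (∫⁻ t in Ioc 0 1, (volume.restrict (ball (0:EuclideanSpace ℝ (Fin N)) 1))
              {a | t ≤ ‖a‖ ^ (-α)}) +
            ∫⁻ t in Ioi 1, (volume.restrict (ball (0:EuclideanSpace ℝ (Fin N)) 1))
              {a | t ≤ ‖a‖ ^ (-α)} := lintegral_union_le _ _ _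
        _ < ∞ := ENNReal.add_lt_top.2 ⟨?_, ?_⟩
      · calc (∫⁻ t in Ioc (0:ℝ) 1, (volume.restrict (ball (0:EuclideanSpace ℝ (Fin N)) 1))
              {a | t ≤ ‖a‖ ^ (-α)})
            ≤ ∫⁻ _ in Ioc (0:ℝ) 1, volume (ball (0:EuclideanSpace ℝ (Fin N)) 1) := by
              refine lintegral_mono fun t => ?_
              calc (volume.restrict (ball (0:EuclideanSpace ℝ (Fin N)) 1)) {a | t ≤ ‖a‖ ^ (-α)}
                  ≤ (volume.restrict (ball (0:EuclideanSpace ℝ (Fin N)) 1)) univ :=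
                    measure_mono (subset_univ _)
                _ = volume (ball (0:EuclideanSpace ℝ (Fin N)) 1) := by
                    rw [Measure.restrict_apply_univ]
          _ = volume (ball (0:EuclideanSpace ℝ (Fin N)) 1) * volume (Ioc (0:ℝ) 1) :=
              setLIntegral_const _ _
          _ < ∞ := by
              refine ENNReal.mul_lt_top measure_ball_lt_top ?_
              simp [Real.volume_Ioc]
      · have hsub : ∀ t ∈ Ioi (1:ℝ),
            (volume.restrict (ball (0:EuclideanSpace ℝ (Fin N)) 1)) {a | t ≤ ‖a‖ ^ (-α)}
              ≤ ENNReal.ofReal (t ^ ((-α)⁻¹ * N)) *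
                volume (ball (0:EuclideanSpace ℝ (Fin N)) 1) := by
          intro t ht
          have ht0 : (0:ℝ) < t := lt_trans one_pos ht
          have hss : {a : EuclideanSpace ℝ (Fin N) | t ≤ ‖a‖ ^ (-α)} ⊆
              closedBall 0 (t ^ (-α)⁻¹) := by
            intro a ha
            simp only [mem_setOf_eq] at ha
            rw [mem_closedBall, dist_zero_right]
            rcases eq_or_ne a 0 with rfl | h0
            · simpa using Real.rpow_nonneg ht0.le _
            · exact (Real.le_rpow_inv_iff_of_neg (norm_pos_iff.2 h0) ht0 (by linarith)).2 ha
          calc (volume.restrict (ball (0:EuclideanSpace ℝ (Fin N)) 1)) {a | t ≤ ‖a‖ ^ (-α)}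
              ≤ volume {a : EuclideanSpace ℝ (Fin N) | t ≤ ‖a‖ ^ (-α)} :=
                Measure.le_iff'.1 Measure.restrict_le_self _
            _ ≤ volume (closedBall (0:EuclideanSpace ℝ (Fin N)) (t ^ (-α)⁻¹)) :=
                measure_mono hss
            _ = ENNReal.ofReal ((t ^ (-α)⁻¹) ^ Module.finrank ℝ (EuclideanSpace ℝ (Fin N))) *
                volume (ball (0:EuclideanSpace ℝ (Fin N)) 1) :=
                Measure.addHaar_closedBall _ _ (Real.rpow_nonneg ht0.le _)
            _ = ENNReal.ofReal (t ^ ((-α)⁻¹ * N)) *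
                volume (ball (0:EuclideanSpace ℝ (Fin N)) 1) := by
                rw [← Real.rpow_natCast (t ^ (-α)⁻¹), ← Real.rpow_mul ht0.le,
                  finrank_euclideanSpace_fin]
        calc (∫⁻ t in Ioi (1:ℝ), (volume.restrict (ball (0:EuclideanSpace ℝ (Fin N)) 1))
              {a | t ≤ ‖a‖ ^ (-α)})
            ≤ ∫⁻ t in Ioi (1:ℝ), ENNReal.ofReal (t ^ ((-α)⁻¹ * N)) *
                volume (ball (0:EuclideanSpace ℝ (Fin N)) 1) :=
              setLIntegral_mono' measurableSet_Ioi hsub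
          _ = (∫⁻ t in Ioi (1:ℝ), ENNReal.ofReal (t ^ ((-α)⁻¹ * N))) *
              volume (ball (0:EuclideanSpace ℝ (Fin N)) 1) :=
              lintegral_mul_const' _ _ measure_ball_lt_top.ne
          _ < ∞ := ENNReal.mul_lt_top
              (integrableOn_Ioi_rpow_of_lt hαN' one_pos).setLIntegral_lt_top
              measure_ball_lt_top

lemma Cconst_pos {N : ℕ} {α : ℝ} (hN : 3 ≤ N) (hα₁ : 4 - (N : ℝ) < α) (hα₂ : α < 2) :
    0 < Cconst N α := by
  have hN3 : (3:ℝ) ≤ (N:ℝ) := by exact_mod_cast hN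
  have h1 : 0 < (N:ℝ) - 4 + α := by linarith
  have h2 : 0 < (N:ℝ) - 2 := by linarith
  have h3 : 0 < (N:ℝ) - α := by linarith
  have h4 : 0 < (N:ℝ) + 2 - 2*α := by linarith
  exact Real.rpow_pos_of_pos (by positivity) _

lemma Ufun_one_pos {N : ℕ} {α : ℝ} (hC : 0 < Cconst N α) (y : EuclideanSpace ℝ (Fin N)) :
    0 < Ufun N α 1 y := by
  have hX : (0:ℝ) < 1 + (1:ℝ) ^ (2 - α) * ‖y‖ ^ (2 - α) := by positivity
  exact mul_pos (mul_pos hC (Real.rpow_pos_of_pos one_pos _)) (Real.rpow_pos_of_pos hX _)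

lemma integrable_F {N : ℕ} {α : ℝ} (hN : 3 ≤ N) (hα₁ : 4 - (N : ℝ) < α) (hα₂ : α < 2) :
    Integrable (fun y : EuclideanSpace ℝ (Fin N) =>
      ‖y‖ ^ (-α) * Ufun N α 1 y ^ pstar N α) := by
  have hN3 : (3:ℝ) ≤ (N:ℝ) := by exact_mod_cast hN
  have h1 : 0 < (N:ℝ) - 4 + α := by linarith
  have hC : 0 < Cconst N α := Cconst_pos hN hα₁ hα₂
  set p := pstar N α with hp
  set b := ((N:ℝ) - 4 + α) / (2 - α) with hb
  have h2ne : (2:ℝ) - α ≠ 0 := ne_of_gt (by linarith)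
  have hbp : b * p = 2 * ((N:ℝ) - α) / (2 - α) := by
    rw [hp, hb, pstar]; field_simp
  have hq : 0 < b * p := by
    rw [hbp]; exact div_pos (by linarith) (by linarith)
  have hF_eq : ∀ y : EuclideanSpace ℝ (Fin N),
      ‖y‖ ^ (-α) * Ufun N α 1 y ^ p
        = Cconst N α ^ p * (‖y‖ ^ (-α) * (1 + ‖y‖ ^ (2 - α)) ^ (-(b * p))) := by
    intro y
    have hx : (0:ℝ) ≤ 1 + ‖y‖ ^ (2 - α) := by positivity
    rw [Ufun]
    simp only [Real.one_rpow, one_mul, mul_one]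
    rw [← hb, Real.mul_rpow hC.le (Real.rpow_nonneg hx _), ← Real.rpow_mul hx, neg_mul]
    ring
  simp_rw [hF_eq]
  apply Integrable.const_mul
  have hGmeas : Measurable (fun y : EuclideanSpace ℝ (Fin N) =>
      ‖y‖ ^ (-α) * (1 + ‖y‖ ^ (2 - α)) ^ (-(b * p))) := by fun_prop
  rw [← integrableOn_univ, ← union_compl_self (ball (0 : EuclideanSpace ℝ (Fin N)) 1)]
  apply IntegrableOn.union
  · refine Integrable.mono (integrableOn_norm_rpow_ball N (α := α) (by linarith))
      hGmeas.aestronglyMeasurable (Eventually.of_forall fun y => ?_)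
    have h1' : (0:ℝ) ≤ ‖y‖ ^ (-α) := Real.rpow_nonneg (norm_nonneg _) _
    have hx : (0:ℝ) < 1 + ‖y‖ ^ (2 - α) := by positivity
    rw [Real.norm_eq_abs, Real.norm_eq_abs, abs_of_nonneg h1',
      abs_of_nonneg (mul_nonneg h1' (Real.rpow_nonneg hx.le _))]
    calc ‖y‖ ^ (-α) * (1 + ‖y‖ ^ (2 - α)) ^ (-(b * p)) ≤ ‖y‖ ^ (-α) * 1 := by
          refine mul_le_mul_of_nonneg_left ?_ h1'
          exact Real.rpow_le_one_of_one_le_of_nonpos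
            (le_add_of_nonneg_right (Real.rpow_nonneg (norm_nonneg _) _)) (by linarith)
      _ = ‖y‖ ^ (-α) := mul_one _
  · set r := 2 * (N:ℝ) - α with hr
    have hr0 : 0 < r := by rw [hr]; linarith
    have hrN : (Module.finrank ℝ (EuclideanSpace ℝ (Fin N)) : ℝ) < r := by
      rw [finrank_euclideanSpace_fin, hr]; linarith
    refine Integrable.mono
      (((integrable_one_add_norm hrN).const_mul ((2:ℝ) ^ r)).integrableOn)
      hGmeas.aestronglyMeasurable ?_
    filter_upwards [ae_restrict_mem measurableSet_ball.compl] with y hy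
    have hy1 : 1 ≤ ‖y‖ := by
      simpa [mem_ball, dist_zero_right, not_lt] using hy
    have hy0 : (0:ℝ) < ‖y‖ := lt_of_lt_of_le one_pos hy1
    have h1' : (0:ℝ) ≤ ‖y‖ ^ (-α) := Real.rpow_nonneg (norm_nonneg _) _
    have hx : (0:ℝ) < 1 + ‖y‖ ^ (2 - α) := by positivity
    rw [Real.norm_eq_abs, Real.norm_eq_abs,
      abs_of_nonneg (mul_nonneg h1' (Real.rpow_nonneg hx.le _)),
      abs_of_nonneg (mul_nonneg (Real.rpow_nonneg two_pos.le _)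
        (Real.rpow_nonneg (by positivity) _))]
    calc ‖y‖ ^ (-α) * (1 + ‖y‖ ^ (2 - α)) ^ (-(b * p))
        ≤ ‖y‖ ^ (-α) * (‖y‖ ^ (2 - α)) ^ (-(b * p)) := by
          refine mul_le_mul_of_nonneg_left
            (Real.rpow_le_rpow_of_nonpos (by positivity) (by linarith) (by linarith)) h1'
      _ = ‖y‖ ^ (-α + (2 - α) * (-(b * p))) := by
          rw [← Real.rpow_mul (norm_nonneg _), ← Real.rpow_add hy0]
      _ = ‖y‖ ^ (-r) := by
          congr 1
          rw [hbp, hr]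
          field_simp
          ring
      _ = (2:ℝ) ^ r * ((2 * ‖y‖) ^ (-r)) := by
          rw [Real.mul_rpow two_pos.le (norm_nonneg _), ← mul_assoc,
            ← Real.rpow_add two_pos, add_neg_cancel, Real.rpow_zero, one_mul]
      _ ≤ (2:ℝ) ^ r * (1 + ‖y‖) ^ (-r) := by
          refine mul_le_mul_of_nonneg_left
            (Real.rpow_le_rpow_of_nonpos (by positivity) (by linarith) (by linarith)) ?_
          positivity

lemma scaling_eq {N : ℕ} {α : ℝ} (hN : 3 ≤ N) (hα₁ : 4 - (N : ℝ) < α) (hα₂ : α < 2)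
    (h : EuclideanSpace ℝ (Fin N) → ℝ) {lam : ℝ} (hlam : 0 < lam) :
    (∫ x : EuclideanSpace ℝ (Fin N), |h x| * ‖x‖ ^ (-α) * Ufun N α lam x ^ pstar N α)
      = ∫ y : EuclideanSpace ℝ (Fin N),
          |h (lam⁻¹ • y)| * (‖y‖ ^ (-α) * Ufun N α 1 y ^ pstar N α) := by
  have hN3 : (3:ℝ) ≤ (N:ℝ) := by exact_mod_cast hN
  have h1 : 0 < (N:ℝ) - 4 + α := by linarith
  have hC : 0 < Cconst N α := Cconst_pos hN hα₁ hα₂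
  set p := pstar N α with hp
  set a := ((N:ℝ) - 4 + α) / 2 with ha
  have hap : a * p = (N:ℝ) - α := by
    rw [ha, hp, pstar]
    field_simp
  have hUscale : ∀ x : EuclideanSpace ℝ (Fin N),
      Ufun N α lam x = lam ^ a * Ufun N α 1 (lam • x) := by
    intro x
    rw [Ufun, Ufun]
    simp only [Real.one_rpow, one_mul, mul_one]
    rw [norm_smul, Real.norm_eq_abs, abs_of_pos hlam, Real.mul_rpow hlam.le (norm_nonneg _),
      ← ha]
    ring
  have key : ∀ x : EuclideanSpace ℝ (Fin N),
      |h x| * ‖x‖ ^ (-α) * Ufun N α lam x ^ p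
        = lam ^ (N:ℝ) *
          (|h (lam⁻¹ • (lam • x))| * (‖lam • x‖ ^ (-α) * Ufun N α 1 (lam • x) ^ p)) := by
    intro x
    have hUpos : (0:ℝ) ≤ Ufun N α 1 (lam • x) := (Ufun_one_pos hC _).le
    rw [smul_smul, inv_mul_cancel₀ hlam.ne', one_smul, hUscale x,
      Real.mul_rpow (Real.rpow_nonneg hlam.le _) hUpos, ← Real.rpow_mul hlam.le, hap,
      norm_smul, Real.norm_eq_abs, abs_of_pos hlam, Real.mul_rpow hlam.le (norm_nonneg _)]
    have hsplit : lam ^ ((N:ℝ) - α) = lam ^ (N:ℝ) * lam ^ (-α) := by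
      rw [← Real.rpow_add hlam, sub_eq_add_neg]
    rw [hsplit]
    ring
  calc (∫ x : EuclideanSpace ℝ (Fin N), |h x| * ‖x‖ ^ (-α) * Ufun N α lam x ^ p)
      = ∫ x : EuclideanSpace ℝ (Fin N), lam ^ (N:ℝ) *
          (|h (lam⁻¹ • (lam • x))| * (‖lam • x‖ ^ (-α) * Ufun N α 1 (lam • x) ^ p)) := by
        simp_rw [key]
    _ = lam ^ (N:ℝ) * ∫ x : EuclideanSpace ℝ (Fin N),
          (fun y => |h (lam⁻¹ • y)| * (‖y‖ ^ (-α) * Ufun N α 1 y ^ p)) (lam • x) :=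
        integral_const_mul _ _
    _ = lam ^ (N:ℝ) * (|(lam ^ Module.finrank ℝ (EuclideanSpace ℝ (Fin N)))⁻¹| •
          ∫ y : EuclideanSpace ℝ (Fin N),
            |h (lam⁻¹ • y)| * (‖y‖ ^ (-α) * Ufun N α 1 y ^ p)) := by
        rw [Measure.integral_comp_smul (volume : Measure (EuclideanSpace ℝ (Fin N)))
          (fun y => |h (lam⁻¹ • y)| * (‖y‖ ^ (-α) * Ufun N α 1 y ^ p)) lam]
    _ = ∫ y : EuclideanSpace ℝ (Fin N),
          |h (lam⁻¹ • y)| * (‖y‖ ^ (-α) * Ufun N α 1 y ^ p) := by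
        rw [finrank_euclideanSpace_fin, smul_eq_mul, ← mul_assoc,
          abs_of_pos (inv_pos.2 (pow_pos hlam _)), ← Real.rpow_natCast lam N,
          mul_inv_cancel₀ (Real.rpow_pos_of_pos hlam _).ne', one_mul]

lemma dct_aux {N : ℕ} {α : ℝ} (hN : 3 ≤ N) (hα₁ : 4 - (N : ℝ) < α) (hα₂ : α < 2)
    (h : EuclideanSpace ℝ (Fin N) → ℝ) (hb : ∃ C, ∀ x, |h x| ≤ C)
    (hc : Continuous h) {l : Filter ℝ} [l.IsCountablyGenerated]
    (hconv : ∀ y : EuclideanSpace ℝ (Fin N), y ≠ 0 →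
      Tendsto (fun lam : ℝ => h (lam⁻¹ • y)) l (nhds 0)) :
    Tendsto (fun lam : ℝ => ∫ y : EuclideanSpace ℝ (Fin N),
      |h (lam⁻¹ • y)| * (‖y‖ ^ (-α) * Ufun N α 1 y ^ pstar N α)) l (nhds 0) := by
  obtain ⟨C, hC⟩ := hb
  have hCpos : 0 ≤ C := le_trans (abs_nonneg _) (hC 0)
  have hCc : 0 < Cconst N α := Cconst_pos hN hα₁ hα₂
  have hFmeas : Measurable (fun y : EuclideanSpace ℝ (Fin N) =>
      ‖y‖ ^ (-α) * Ufun N α 1 y ^ pstar N α) := by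
    unfold Ufun; fun_prop
  have hFnn : ∀ y : EuclideanSpace ℝ (Fin N),
      0 ≤ ‖y‖ ^ (-α) * Ufun N α 1 y ^ pstar N α := fun y =>
    mul_nonneg (Real.rpow_nonneg (norm_nonneg _) _)
      (Real.rpow_nonneg (Ufun_one_pos hCc _).le _)
  haveI : Nonempty (Fin N) := ⟨⟨0, by omega⟩⟩
  have h0meas : volume ({(0 : EuclideanSpace ℝ (Fin N))} : Set (EuclideanSpace ℝ (Fin N))) = 0 :=
    measure_singleton 0
  have main := tendsto_integral_filter_of_dominated_convergence (μ := volume) (l := l)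
    (F := fun lam y => |h (lam⁻¹ • y)| * (‖y‖ ^ (-α) * Ufun N α 1 y ^ pstar N α))
    (f := fun _ => (0:ℝ))
    (bound := fun y => C * (‖y‖ ^ (-α) * Ufun N α 1 y ^ pstar N α))
    (Eventually.of_forall fun lam =>
      ((hc.comp (continuous_const_smul lam⁻¹)).abs.aestronglyMeasurable).mul
        hFmeas.aestronglyMeasurable)
    (Eventually.of_forall fun lam => Eventually.of_forall fun y => by
      rw [Real.norm_eq_abs, abs_of_nonneg (mul_nonneg (abs_nonneg _) (hFnn y))]
      exact mul_le_mul_of_nonneg_right (hC _) (hFnn y))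
    ((integrable_F hN hα₁ hα₂).const_mul C)
    ?_
  · simpa using main
  · filter_upwards [compl_mem_ae_iff.mpr h0meas] with y hy
    have : Tendsto (fun lam : ℝ => |h (lam⁻¹ • y)| *
        (‖y‖ ^ (-α) * Ufun N α 1 y ^ pstar N α)) l
        (nhds (|0| * (‖y‖ ^ (-α) * Ufun N α 1 y ^ pstar N α))) :=
      ((hconv y hy).abs).mul_const _
    simpa using this

end AuxProof

set_option maxHeartbeats 1000000 in
/-- if `h` vanishes at the origin and at infinity then
`‖|h|^{1/p*_α}U_{λ,α}‖_* → 0` as `λ → 0⁺` and as `λ → ∞`. -/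
theorem weighted_norm_vanishes (N : ℕ) (hN : 3 ≤ N) (α : ℝ)
    (hα₁ : 4 - (N : ℝ) < α) (hα₂ : α < 2)
    (h : EuclideanSpace ℝ (Fin N) → ℝ) (hb : ∃ C, ∀ x, |h x| ≤ C) (hc : Continuous h)
    (h0 : Tendsto h (nhds 0) (nhds 0))
    (hinf : Tendsto h (Bornology.cobounded (EuclideanSpace ℝ (Fin N))) (nhds 0)) :
    Tendsto (fun lam : ℝ => (∫ x : EuclideanSpace ℝ (Fin N),
        |h x| * ‖x‖ ^ (-α) * Ufun N α lam x ^ pstar N α) ^ (1 / pstar N α))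
      (nhdsWithin 0 (Ioi 0)) (nhds 0) ∧
    Tendsto (fun lam : ℝ => (∫ x : EuclideanSpace ℝ (Fin N),
        |h x| * ‖x‖ ^ (-α) * Ufun N α lam x ^ pstar N α) ^ (1 / pstar N α))
      atTop (nhds 0) := by
  have hN3 : (3:ℝ) ≤ (N:ℝ) := by exact_mod_cast hN
  have hp_pos : 0 < pstar N α := div_pos (by linarith) (by linarith)
  have hinv_pos : 0 < 1 / pstar N α := by positivity
  constructor
  · -- lam → 0⁺
    have hconv : ∀ y : EuclideanSpace ℝ (Fin N), y ≠ 0 →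
        Tendsto (fun lam : ℝ => h (lam⁻¹ • y)) (nhdsWithin 0 (Ioi 0)) (nhds 0) := by
      intro y hy
      apply hinf.comp
      rw [← tendsto_norm_atTop_iff_cobounded]
      have : Tendsto (fun lam : ℝ => |lam⁻¹| * ‖y‖) (nhdsWithin (0:ℝ) (Ioi 0)) atTop :=
        (tendsto_abs_atTop_atTop.comp tendsto_inv_nhdsGT_zero).atTop_mul_const
          (norm_pos_iff.2 hy)
      refine this.congr fun lam => ?_
      rw [norm_smul, Real.norm_eq_abs]
    have hI := dct_aux hN hα₁ hα₂ h hb hc hconv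
    have hI' : Tendsto (fun lam : ℝ => ∫ x : EuclideanSpace ℝ (Fin N),
        |h x| * ‖x‖ ^ (-α) * Ufun N α lam x ^ pstar N α) (nhdsWithin 0 (Ioi 0)) (nhds 0) := by
      refine hI.congr' ?_
      filter_upwards [self_mem_nhdsWithin] with lam hlam
      exact (scaling_eq hN hα₁ hα₂ h hlam).symm
    have h2 := hI'.rpow_const (p := 1 / pstar N α) (Or.inr hinv_pos.le)
    rwa [Real.zero_rpow hinv_pos.ne'] at h2
  · have hconv : ∀ y : EuclideanSpace ℝ (Fin N), y ≠ 0 →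
        Tendsto (fun lam : ℝ => h (lam⁻¹ • y)) atTop (nhds 0) := by
      intro y _
      have hsm : Tendsto (fun lam : ℝ => lam⁻¹ • y) atTop (nhds ((0:ℝ) • y)) :=
        Tendsto.smul_const tendsto_inv_atTop_zero y
      rw [zero_smul] at hsm
      exact h0.comp hsm
    have hI := dct_aux hN hα₁ hα₂ h hb hc hconv
    have hI' : Tendsto (fun lam : ℝ => ∫ x : EuclideanSpace ℝ (Fin N),
        |h x| * ‖x‖ ^ (-α) * Ufun N α lam x ^ pstar N α) atTop (nhds 0) := by
      refine hI.congr' ?_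
      filter_upwards [eventually_gt_atTop 0] with lam hlam
      exact (scaling_eq hN hα₁ hα₂ h hlam).symm
    have h2 := hI'.rpow_const (p := 1 / pstar N α) (Or.inr hinv_pos.le)
    rwa [Real.zero_rpow hinv_pos.ne'] at h2
end
end

section
/- Let N ≥ 3, 4 − N < α < 2, p*_α = 2(N−α)/(N−4+α), and U_{1,α}(x) = C_{N,α}(1+|x|^{2−α})^{−(N−4+α)/(2−α)} with C_{N,α} = [(N−4+α)(N−2)(N−α)(N+2−2α)]^{(N−4+α)/(8−4α)}. Then for every x ∈ ℝ^N ∖ {0}: Δ(|x|^α Δ U_{1,α})(x) = C_{N,α}(N−4+α)(N−2)(N−α)(N+2−2α) |x|^{−α}(1+|x|^{2−α})^{−(N+4−3α)/(2−α)} = |x|^{−α} U_{1,α}(x)^{p*_α − 1}, i.e. U_{1,α} is a classical solution of Δ(|x|^αΔu) = |x|^{−α}u^{p*_α−1} on ℝ^N ∖ {0}. -/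
open MeasureTheory Filter Real Set

noncomputable section

-- ===== auxiliary material =====

section Aux

variable {N : ℕ}

lemma aux_inner_single (x : EuclideanSpace ℝ (Fin N)) (i : Fin N) :
    (inner ℝ x (EuclideanSpace.single i (1:ℝ)) : ℝ) = x i := by
  rw [EuclideanSpace.inner_single_right]; simp

lemma aux_lap_congr {u v : EuclideanSpace ℝ (Fin N) → ℝ} {U : Set (EuclideanSpace ℝ (Fin N))}
    (hU : IsOpen U) (h : ∀ y ∈ U, u y = v y) {x : EuclideanSpace ℝ (Fin N)} (hx : x ∈ U) :
    lap N u x = lap N v x := by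
  unfold lap
  refine Finset.sum_congr rfl fun i _ => ?_
  have hev : ∀ z ∈ U, (fun y => fderiv ℝ u y (EuclideanSpace.single i 1)) z
      = (fun y => fderiv ℝ v y (EuclideanSpace.single i 1)) z := by
    intro z hz
    have : fderiv ℝ u z = fderiv ℝ v z :=
      Filter.EventuallyEq.fderiv_eq ((hU.eventually_mem hz).mono h)
    simp [this]
  have : fderiv ℝ (fun y => fderiv ℝ u y (EuclideanSpace.single i 1)) x
      = fderiv ℝ (fun y => fderiv ℝ v y (EuclideanSpace.single i 1)) x :=
    Filter.EventuallyEq.fderiv_eq ((hU.eventually_mem hx).mono hev)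
  rw [this]

lemma aux_hasFDerivAt_comp_sqnorm (g g' : ℝ → ℝ)
    (hg : ∀ s, 0 < s → HasDerivAt g (g' s) s)
    {y : EuclideanSpace ℝ (Fin N)} (hy : y ≠ 0) :
    HasFDerivAt (fun y : EuclideanSpace ℝ (Fin N) => g (‖y‖^2))
      ((g' (‖y‖^2)) • (2 • (innerSL ℝ y))) y :=
  ((hg _ (by simpa [sq_pos_of_ne_zero] using pow_pos (norm_pos_iff.mpr hy) 2)).hasFDerivAt.comp y
      (hasStrictFDerivAt_norm_sq y).hasFDerivAt).congr_fderiv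
    (by ext v; simp [mul_comm, mul_assoc, Finset.sum_mul])

lemma aux_lap_comp_sqnorm (f f' f'' : ℝ → ℝ)
    (hf : ∀ s, 0 < s → HasDerivAt f (f' s) s)
    (hf' : ∀ s, 0 < s → HasDerivAt f' (f'' s) s)
    (x : EuclideanSpace ℝ (Fin N)) (hx : x ≠ 0) :
    lap N (fun y => f (‖y‖^2)) x = 4*‖x‖^2 * f'' (‖x‖^2) + 2*N*f' (‖x‖^2) := by
  have hfd1 : ∀ (y : EuclideanSpace ℝ (Fin N)), y ≠ 0 → ∀ i : Fin N,
      fderiv ℝ (fun y : EuclideanSpace ℝ (Fin N) => f (‖y‖^2)) y (EuclideanSpace.single i 1)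
        = f' (‖y‖^2) * (2 * y i) := by
    intro y hy i
    rw [(aux_hasFDerivAt_comp_sqnorm f f' hf hy).fderiv]
    simp [aux_inner_single, real_inner_smul_left]
  have key : ∀ i : Fin N,
      fderiv ℝ (fun y => fderiv ℝ (fun y : EuclideanSpace ℝ (Fin N) => f (‖y‖^2)) y
          (EuclideanSpace.single i 1)) x (EuclideanSpace.single i 1)
        = 4 * (x i)^2 * f'' (‖x‖^2) + 2 * f' (‖x‖^2) := by
    intro i
    have hF : HasFDerivAt (fun y : EuclideanSpace ℝ (Fin N) => f' (‖y‖^2) * (2 * y i))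
        ((f' (‖x‖^2)) • ((2:ℝ) • (EuclideanSpace.proj i : EuclideanSpace ℝ (Fin N) →L[ℝ] ℝ))
          + (2 * x i) • ((f'' (‖x‖^2)) • (2 • (innerSL ℝ x)))) x := by
      exact (aux_hasFDerivAt_comp_sqnorm f' f'' hf' hx).mul
        (((EuclideanSpace.proj i : EuclideanSpace ℝ (Fin N) →L[ℝ] ℝ).hasFDerivAt
          (x := x)).const_mul 2)
    have hev : (fun y => fderiv ℝ (fun y : EuclideanSpace ℝ (Fin N) => f (‖y‖^2)) y
          (EuclideanSpace.single i 1))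
        =ᶠ[nhds x] (fun y : EuclideanSpace ℝ (Fin N) => f' (‖y‖^2) * (2 * y i)) :=
      ((isOpen_compl_singleton.eventually_mem hx).mono (fun y hy => hfd1 y hy i))
    rw [hev.fderiv_eq, hF.fderiv]
    simp [aux_inner_single, real_inner_smul_left, EuclideanSpace.single_apply]
    ring
  have hnorm : ∑ i : Fin N, (x i)^2 = ‖x‖^2 := by
    rw [EuclideanSpace.norm_eq, Real.sq_sqrt (by positivity)]
    simp [sq_abs]
  unfold lap
  rw [Finset.sum_congr rfl (fun i _ => key i)]
  rw [Finset.sum_add_distrib, ← Finset.sum_mul, ← Finset.mul_sum, hnorm, Finset.sum_const,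
    Finset.card_univ, Fintype.card_fin, nsmul_eq_mul]
  ring

end Aux

def Trm (q a e : ℝ) (s : ℝ) : ℝ := s^a * (1+s^q)^e
def Trm' (q a e : ℝ) (s : ℝ) : ℝ :=
  a * s^(a-1) * (1+s^q)^e + s^a * (e * (1+s^q)^(e-1) * (q * s^(q-1)))
def Trm'' (q a e : ℝ) (s : ℝ) : ℝ :=
  a * Trm' q (a-1) e s + (e*q) * Trm' q (a+q-1) (e-1) s

lemma hasDerivAt_Trm (q a e : ℝ) {s : ℝ} (hs : 0 < s) :
    HasDerivAt (Trm q a e) (Trm' q a e s) s := by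
  have hw : (0:ℝ) < 1 + s^q := by positivity
  have h1 : HasDerivAt (fun s : ℝ => s^a) (a * s^(a-1)) s :=
    Real.hasDerivAt_rpow_const (Or.inl hs.ne')
  have hq : HasDerivAt (fun s : ℝ => 1 + s^q) (q * s^(q-1)) s :=
    (Real.hasDerivAt_rpow_const (Or.inl hs.ne')).const_add 1
  have h2 : HasDerivAt (fun w : ℝ => w^e) (e * (1+s^q)^(e-1)) (1+s^q) :=
    Real.hasDerivAt_rpow_const (Or.inl hw.ne')
  have h3 := h2.comp s hq
  exact h1.mul h3

lemma Trm'_eq (q a e : ℝ) {s : ℝ} (hs : 0 < s) :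
    Trm' q a e s = a * Trm q (a-1) e s + (e*q) * Trm q (a+q-1) (e-1) s := by
  unfold Trm Trm'
  rw [show a + q - 1 = a + (q-1) from by ring, Real.rpow_add hs]
  ring

lemma hasDerivAt_Trm' (q a e : ℝ) {s : ℝ} (hs : 0 < s) :
    HasDerivAt (Trm' q a e) (Trm'' q a e s) s := by
  have h : HasDerivAt (fun s => a * Trm q (a-1) e s + (e*q) * Trm q (a+q-1) (e-1) s)
      (a * Trm' q (a-1) e s + (e*q) * Trm' q (a+q-1) (e-1) s) s :=
    ((hasDerivAt_Trm q (a-1) e hs).const_mul a).add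
      ((hasDerivAt_Trm q (a+q-1) (e-1) hs).const_mul (e*q))
  refine HasDerivAt.congr_of_eventuallyEq h ?_
  filter_upwards [isOpen_Ioi.eventually_mem hs] with t ht
  exact Trm'_eq q a e ht

lemma alg1 (n α A q β s : ℝ) (h2 : α < 2)
    (hq : q = (2-α)/2) (hβ : β = (n-4+α)/(2-α)) (hs : 0 < s) :
    4*s*(A * Trm'' q 0 (-β) s) + 2*n*(A * Trm' q 0 (-β) s)
      = s^(q-1) * ((-(A*(n-4+α)))*(n-α) * Trm q 0 (-β-2) s
          + (-(A*(n-4+α)))*(2-α) * Trm q q (-β-2) s) := by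
  have hw : (0:ℝ) < 1 + s^q := by positivity
  have hα2 : (2:ℝ) - α ≠ 0 := by linarith
  have hwe1 : (1+s^q)^(-β) = (1+s^q)^(-β-2)*(1+s^q)*(1+s^q) := by
    rw [← Real.rpow_add_one hw.ne', ← Real.rpow_add_one hw.ne']; congr 1; ring
  have hwe2 : (1+s^q)^(-β-1) = (1+s^q)^(-β-2)*(1+s^q) := by
    rw [← Real.rpow_add_one hw.ne']; congr 1; ring
  have hwe3 : (1+s^q)^(-β-1-1) = (1+s^q)^(-β-2) := by
    congr 1; ring
  have hse1 : s^(q-1-1) = s^(q-1)/s := by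
    rw [eq_div_iff hs.ne', ← Real.rpow_add_one hs.ne']; congr 1; ring
  have hse2 : s^q = s^(q-1)*s := by
    rw [← Real.rpow_add_one hs.ne']; congr 1; ring
  simp only [Trm, Trm', Trm'']
  rw [show (0:ℝ)+q-1 = q-1 from by ring]
  rw [hwe1, hwe2, hwe3, hse1, hse2, Real.rpow_zero]
  rw [hβ, hq]
  field_simp
  ring

lemma alg2 (n α A q β s : ℝ) (h2 : α < 2)
    (hq : q = (2-α)/2) (hβ : β = (n-4+α)/(2-α)) (hs : 0 < s) :
    4*s*((-(A*(n-4+α)))*(n-α) * Trm'' q 0 (-β-2) s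
          + (-(A*(n-4+α)))*(2-α) * Trm'' q q (-β-2) s)
      + 2*n*((-(A*(n-4+α)))*(n-α) * Trm' q 0 (-β-2) s
          + (-(A*(n-4+α)))*(2-α) * Trm' q q (-β-2) s)
      = (A*((n-4+α)*(n-2)*(n-α)*(n+2-2*α))) * (s^(q-1) * (1+s^q)^(-β-4)) := by
  have hw : (0:ℝ) < 1 + s^q := by positivity
  have hα2 : (2:ℝ) - α ≠ 0 := by linarith
  have hwe1 : (1+s^q)^(-β-2) = (1+s^q)^(-β-4)*(1+s^q)*(1+s^q) := by
    rw [← Real.rpow_add_one hw.ne', ← Real.rpow_add_one hw.ne']; congr 1; ring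
  have hwe2 : (1+s^q)^(-β-2-1) = (1+s^q)^(-β-4)*(1+s^q) := by
    rw [← Real.rpow_add_one hw.ne']; congr 1; ring
  have hwe3 : (1+s^q)^(-β-2-1-1) = (1+s^q)^(-β-4) := by
    congr 1; ring
  have hse1 : s^(q-1-1) = s^(q-1)/s := by
    rw [eq_div_iff hs.ne', ← Real.rpow_add_one hs.ne']; congr 1; ring
  have hse3 : s^(q+q-1) = s^(q-1)*(s^(q-1)*s) := by
    rw [← Real.rpow_add_one hs.ne', ← Real.rpow_add hs]; congr 1; ring
  have hse4 : s^(q+q-1-1) = s^(q-1)*s^(q-1) := by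
    rw [← Real.rpow_add hs]; congr 1; ring
  have hse2 : s^q = s^(q-1)*s := by
    rw [← Real.rpow_add_one hs.ne']; congr 1; ring
  simp only [Trm, Trm', Trm'']
  rw [show (0:ℝ)+q-1 = q-1 from by ring]
  rw [hwe1, hwe2, hwe3, hse1, hse3, hse4, hse2, Real.rpow_zero]
  rw [hβ, hq]
  field_simp
  ring

/-- explicit computation: `U_{1,α}` is a classical solution of
`Δ(|x|^αΔu) = |x|^{-α}u^{p*_α-1}` on `ℝ^N ∖ {0}`, with
`Δ(|x|^αΔU_{1,α}) = C_{N,α}(N-4+α)(N-2)(N-α)(N+2-2α)|x|^{-α}(1+|x|^{2-α})^{-(N+4-3α)/(2-α)}`. -/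
theorem U_is_classical_solution (N : ℕ) (hN : 3 ≤ N) (α : ℝ)
    (hα₁ : 4 - (N : ℝ) < α) (hα₂ : α < 2) :
    ∀ x : EuclideanSpace ℝ (Fin N), x ≠ 0 →
      bilap N α (Ufun N α 1) x
        = Cconst N α * (((N : ℝ) - 4 + α) * ((N : ℝ) - 2) * ((N : ℝ) - α) *
              ((N : ℝ) + 2 - 2 * α)) * ‖x‖ ^ (-α) *
            (1 + ‖x‖ ^ (2 - α)) ^ (-(((N : ℝ) + 4 - 3 * α) / (2 - α))) ∧
      bilap N α (Ufun N α 1) x = ‖x‖ ^ (-α) * Ufun N α 1 x ^ (pstar N α - 1) := by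
  intro x hx
  have hN3 : (3:ℝ) ≤ (N:ℝ) := by exact_mod_cast hN
  have hα2 : (2:ℝ) - α ≠ 0 := by linarith
  have hn4 : 0 < (N:ℝ)-4+α := by linarith
  have hn2 : 0 < (N:ℝ)-2 := by linarith
  have hnα : 0 < (N:ℝ)-α := by linarith
  have hn22 : 0 < (N:ℝ)+2-2*α := by linarith
  have hprod : 0 < ((N:ℝ)-4+α)*((N:ℝ)-2)*((N:ℝ)-α)*((N:ℝ)+2-2*α) :=
    mul_pos (mul_pos (mul_pos hn4 hn2) hnα) hn22
  have hA : 0 < Cconst N α := Real.rpow_pos_of_pos hprod _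
  have hxn : 0 < ‖x‖ := norm_pos_iff.mpr hx
  set A := Cconst N α with hAdef
  set q : ℝ := (2-α)/2 with hqdef
  set β : ℝ := ((N:ℝ)-4+α)/(2-α) with hβdef
  -- norm facts
  have hsqq : ∀ y : EuclideanSpace ℝ (Fin N), (‖y‖^2 : ℝ)^q = ‖y‖^(2-α) := by
    intro y
    rw [← Real.rpow_natCast ‖y‖ 2, ← Real.rpow_mul (norm_nonneg y)]
    congr 1
    rw [hqdef]; push_cast; ring
  have hsqq1 : (‖x‖^2 : ℝ)^(q-1) = ‖x‖^(-α) := by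
    rw [← Real.rpow_natCast ‖x‖ 2, ← Real.rpow_mul (norm_nonneg x)]
    congr 1
    rw [hqdef]; push_cast; ring
  have hxs : (0:ℝ) < ‖x‖^2 := by positivity
  -- U as a composition
  have hU : Ufun N α 1 = fun y : EuclideanSpace ℝ (Fin N) => A * Trm q 0 (-β) (‖y‖^2) := by
    funext y
    unfold Ufun Trm
    rw [Real.one_rpow, Real.one_rpow, mul_one, one_mul, Real.rpow_zero, one_mul, hsqq y,
      hβdef]
  -- derivative data
  have hf1 : ∀ s, 0 < s → HasDerivAt (fun s => A * Trm q 0 (-β) s) (A * Trm' q 0 (-β) s) s :=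
    fun s hs => (hasDerivAt_Trm q 0 (-β) hs).const_mul A
  have hf2 : ∀ s, 0 < s → HasDerivAt (fun s => A * Trm' q 0 (-β) s) (A * Trm'' q 0 (-β) s) s :=
    fun s hs => (hasDerivAt_Trm' q 0 (-β) hs).const_mul A
  have hg1 : ∀ s, 0 < s → HasDerivAt
      (fun s => (-(A*((N:ℝ)-4+α)))*((N:ℝ)-α) * Trm q 0 (-β-2) s
        + (-(A*((N:ℝ)-4+α)))*(2-α) * Trm q q (-β-2) s)
      ((-(A*((N:ℝ)-4+α)))*((N:ℝ)-α) * Trm' q 0 (-β-2) s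
        + (-(A*((N:ℝ)-4+α)))*(2-α) * Trm' q q (-β-2) s) s :=
    fun s hs => ((hasDerivAt_Trm q 0 (-β-2) hs).const_mul _).add
      ((hasDerivAt_Trm q q (-β-2) hs).const_mul _)
  have hg2 : ∀ s, 0 < s → HasDerivAt
      (fun s => (-(A*((N:ℝ)-4+α)))*((N:ℝ)-α) * Trm' q 0 (-β-2) s
        + (-(A*((N:ℝ)-4+α)))*(2-α) * Trm' q q (-β-2) s)
      ((-(A*((N:ℝ)-4+α)))*((N:ℝ)-α) * Trm'' q 0 (-β-2) s
        + (-(A*((N:ℝ)-4+α)))*(2-α) * Trm'' q q (-β-2) s) s :=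
    fun s hs => ((hasDerivAt_Trm' q 0 (-β-2) hs).const_mul _).add
      ((hasDerivAt_Trm' q q (-β-2) hs).const_mul _)
  -- the weighted laplacian of U
  have hlapU : ∀ y : EuclideanSpace ℝ (Fin N), y ≠ 0 →
      ‖y‖^α * lap N (Ufun N α 1) y
        = (-(A*((N:ℝ)-4+α)))*((N:ℝ)-α) * Trm q 0 (-β-2) (‖y‖^2)
          + (-(A*((N:ℝ)-4+α)))*(2-α) * Trm q q (-β-2) (‖y‖^2) := by
    intro y hy
    have hyn : 0 < ‖y‖ := norm_pos_iff.mpr hy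
    have hys : (0:ℝ) < ‖y‖^2 := by positivity
    rw [hU, aux_lap_comp_sqnorm _ _ _ hf1 hf2 y hy,
      alg1 (N:ℝ) α A q β (‖y‖^2) hα₂ hqdef hβdef hys]
    have h1 : (‖y‖^2 : ℝ)^(q-1) = ‖y‖^(-α) := by
      rw [← Real.rpow_natCast ‖y‖ 2, ← Real.rpow_mul (norm_nonneg y)]
      congr 1
      rw [hqdef]; push_cast; ring
    rw [← mul_assoc, h1, ← Real.rpow_add hyn]
    norm_num
  -- compute the bilaplacian
  have hbil : bilap N α (Ufun N α 1) x
      = A*(((N:ℝ)-4+α)*((N:ℝ)-2)*((N:ℝ)-α)*((N:ℝ)+2-2*α))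
        * (‖x‖^(-α) * (1+‖x‖^(2-α))^(-β-4)) := by
    unfold bilap
    rw [aux_lap_congr isOpen_compl_singleton (fun y hy => hlapU y hy) hx,
      aux_lap_comp_sqnorm _ _ _ hg1 hg2 x hx,
      alg2 (N:ℝ) α A q β (‖x‖^2) hα₂ hqdef hβdef hxs, hsqq1, hsqq x]
  have hexp : -β-4 = -(((N:ℝ)+4-3*α)/(2-α)) := by
    rw [hβdef]; field_simp; ring
  constructor
  · rw [hbil, hexp]; ring
  · rw [hbil]
    have hw : (0:ℝ) < 1+‖x‖^(2-α) := by positivity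
    have hUx : Ufun N α 1 x = A * (1+‖x‖^(2-α))^(-β) := by
      rw [hU]; simp only [Trm]; rw [Real.rpow_zero, one_mul, hsqq x]
    rw [hUx, Real.mul_rpow hA.le (Real.rpow_nonneg hw.le _),
      ← Real.rpow_mul hw.le]
    have hApow : A ^ (pstar N α - 1)
        = A * (((N:ℝ)-4+α)*((N:ℝ)-2)*((N:ℝ)-α)*((N:ℝ)+2-2*α)) := by
      rw [hAdef]
      unfold Cconst
      rw [← Real.rpow_mul hprod.le]
      nth_rewrite 3 [← Real.rpow_one (((N:ℝ)-4+α)*((N:ℝ)-2)*((N:ℝ)-α)*((N:ℝ)+2-2*α))]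
      rw [← Real.rpow_add hprod]
      congr 1
      unfold pstar
      have h84 : (8:ℝ) - 4*α ≠ 0 := by linarith
      field_simp
      ring
    have hexp2 : -β * (pstar N α - 1) = -β-4 := by
      rw [hβdef]
      unfold pstar
      field_simp
      ring
    rw [hApow, hexp2]
    ring
end
end
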